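/- For m, n ≥ 0 and j ≥ 0, the operator identity (XD − mλ)_{n,λ} X^j = X^j Σ_{k=0}^{n} C(n,k) (XD)_{k,λ} (j − mλ)_{n−k,λ} holds, where (A)_{n,λ} = A(A−λ)⋯(A−(n−1)λ) for an operator A. -/

import Mathlib

open Finset Polynomial

/-- The degenerate falling factorial `(y)_{n,λ}`. -/
noncomputable def degFall (l x : ℝ) (n : ℕ) : ℝ :=
  ∏ i ∈ Finset.range n, (x - (i : ℝ) * l)

/-- The multiplication-by-x operator `X` on polynomials. -/
noncomputable def Xop : Module.End ℝ (Polynomial ℝ) :=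
  LinearMap.mulLeft ℝ (Polynomial.X : Polynomial ℝ)

/-- The differentiation operator `D` on polynomials. -/
noncomputable def Dop : Module.End ℝ (Polynomial ℝ) :=
  Polynomial.derivative

/-- The degenerate falling factorial `(A)_{n,λ} = A(A-λ)⋯(A-(n-1)λ)` of an operator `A`. -/
noncomputable def opFall (l : ℝ) (A : Module.End ℝ (Polynomial ℝ)) (n : ℕ) :
    Module.End ℝ (Polynomial ℝ) :=
  ((List.range n).map (fun i => A - ((i : ℝ) * l) • (1 : Module.End ℝ (Polynomial ℝ)))).prod

theorem vand (l c : ℝ) (n : ℕ) (x : ℝ) :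
    ∏ i ∈ range n, (x + c - (i:ℝ)*l) =
      ∑ k ∈ range (n+1), (n.choose k : ℝ) *
        (∏ i ∈ range (n-k), (c - (i:ℝ)*l)) * ∏ i ∈ range k, (x - (i:ℝ)*l) := by
  induction n with
  | zero => simp
  | succ n ih =>
    rw [prod_range_succ, ih, sum_mul]
    have split : ∀ k ∈ range (n+1),
        (n.choose k : ℝ) * (∏ i ∈ range (n-k), (c - (i:ℝ)*l)) * (∏ i ∈ range k, (x - (i:ℝ)*l))
          * (x + c - (n:ℝ)*l)
        = (n.choose k : ℝ) * (∏ i ∈ range (n-k), (c - (i:ℝ)*l)) * (∏ i ∈ range (k+1), (x - (i:ℝ)*l))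
          + (n.choose k : ℝ) * (∏ i ∈ range (n+1-k), (c - (i:ℝ)*l)) * (∏ i ∈ range k, (x - (i:ℝ)*l)) := by
      intro k hk
      rw [mem_range] at hk
      have hk' : k ≤ n := Nat.lt_succ_iff.mp hk
      have h1 : n + 1 - k = (n - k) + 1 := by omega
      rw [prod_range_succ, h1, prod_range_succ]
      have h2 : ((n - k : ℕ) : ℝ) = (n : ℝ) - (k : ℝ) := by
        push_cast [hk']; ring
      rw [h2]; ring
    rw [Finset.sum_congr rfl split, Finset.sum_add_distrib]
    have e2 : ∑ k ∈ range (n+1), (n.choose k : ℝ) * (∏ i ∈ range (n+1-k), (c - (i:ℝ)*l)) * (∏ i ∈ range k, (x - (i:ℝ)*l))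
        = (∑ k ∈ range (n+1), ((n.choose (k+1)) : ℝ) * (∏ i ∈ range (n-k), (c - (i:ℝ)*l)) * (∏ i ∈ range (k+1), (x - (i:ℝ)*l)))
          + (∏ i ∈ range (n+1), (c - (i:ℝ)*l)) := by
      rw [Finset.sum_range_succ' (fun k => (n.choose k : ℝ) *
        (∏ i ∈ range (n+1-k), (c - (i:ℝ)*l)) * ∏ i ∈ range k, (x - (i:ℝ)*l))]
      congr 1
      · rw [Finset.sum_range_succ]
        simp only [Nat.choose_succ_self, Nat.cast_zero, zero_mul, add_zero]
        apply Finset.sum_congr rfl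
        intro k hk
        rw [mem_range] at hk
        have : n + 1 - (k+1) = n - k := by omega
        rw [this]
      · simp
    rw [e2, ← add_assoc, ← Finset.sum_add_distrib]
    rw [Finset.sum_range_succ' (fun k => ((n+1).choose k : ℝ) *
        (∏ i ∈ range (n+1-k), (c - (i:ℝ)*l)) * ∏ i ∈ range k, (x - (i:ℝ)*l))]
    congr 1
    · apply Finset.sum_congr rfl
      intro k hk
      rw [mem_range] at hk
      have h1 : n + 1 - (k+1) = n - k := by omega
      rw [h1, Nat.choose_succ_succ']
      push_cast
      ring
    · simp

theorem vand_poly (l c : ℝ) (n : ℕ) :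
    ∏ i ∈ range n, (X + C c - C ((i:ℝ)*l)) =
      ∑ k ∈ range (n+1), C ((n.choose k : ℝ) * degFall l c (n-k)) *
        ∏ i ∈ range k, (X - C ((i:ℝ)*l)) := by
  apply Polynomial.funext
  intro x
  have := vand l c n x
  simpa [degFall, eval_prod, eval_finset_sum, mul_assoc] using this

theorem opFall_succ (l : ℝ) (A : Module.End ℝ (Polynomial ℝ)) (n : ℕ) :
    opFall l A (n+1) = opFall l A n * (A - ((n:ℝ)*l) • 1) := by
  simp [opFall, List.range_succ]

theorem opFall_eq_aeval (l : ℝ) (A : Module.End ℝ (Polynomial ℝ)) (n : ℕ) :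
    opFall l A n = aeval A (∏ i ∈ range n, (X - C ((i:ℝ)*l))) := by
  induction n with
  | zero => simp [opFall]
  | succ n ih =>
    rw [opFall_succ, prod_range_succ, map_mul, ih, map_sub, aeval_X, aeval_C,
      Algebra.algebraMap_eq_smul_one]

theorem opFall_add_eq_aeval (l c : ℝ) (A : Module.End ℝ (Polynomial ℝ)) (n : ℕ) :
    opFall l (A + c • 1) n = aeval A (∏ i ∈ range n, (X + C c - C ((i:ℝ)*l))) := by
  induction n with
  | zero => simp [opFall]
  | succ n ih =>
    rw [opFall_succ, prod_range_succ, map_mul, ih, map_sub, map_add, aeval_X, aeval_C, aeval_C,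
      Algebra.algebraMap_eq_smul_one, Algebra.algebraMap_eq_smul_one, add_sub_assoc]

theorem DX_comm : Dop * Xop = Xop * Dop + 1 := by
  apply LinearMap.ext
  intro p
  simp [Dop, Xop, Module.End.mul_apply, LinearMap.mulLeft_apply, derivative_mul, add_comm]

theorem TX_comm (a : ℝ) :
    (Xop * Dop + a • 1) * Xop = Xop * (Xop * Dop + (a + 1) • 1) := by
  have h : Xop * Dop * Xop = Xop * (Xop * Dop + 1) := by
    rw [mul_assoc, DX_comm]
  rw [add_mul, mul_add, h, smul_mul_assoc, mul_smul_comm]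
  rw [mul_add, add_smul, one_smul, one_mul, mul_one]
  abel

theorem smul_collapse (c a : ℝ) :
    Xop * Dop + c • (1 : Module.End ℝ (Polynomial ℝ)) - a • 1 = Xop * Dop + (c - a) • 1 := by
  module


theorem opFall_mul_X (l c : ℝ) (n : ℕ) :
    opFall l (Xop * Dop + c • 1) n * Xop = Xop * opFall l (Xop * Dop + (c+1) • 1) n := by
  induction n with
  | zero => simp [opFall]
  | succ n ih =>
    have hf : (Xop * Dop + c • 1 - ((n:ℝ)*l) • 1) * Xop
        = Xop * (Xop * Dop + (c+1) • 1 - ((n:ℝ)*l) • 1) := by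
      rw [smul_collapse, smul_collapse, TX_comm]
      ring_nf
    rw [opFall_succ, opFall_succ, mul_assoc, hf, ← mul_assoc, ih, mul_assoc]

theorem opFall_mul_Xpow (l c : ℝ) (n j : ℕ) :
    opFall l (Xop * Dop + c • 1) n * Xop ^ j
      = Xop ^ j * opFall l (Xop * Dop + (c + (j:ℝ)) • 1) n := by
  induction j generalizing c with
  | zero => simp
  | succ j ih =>
    have hc : (c + 1) + (j:ℝ) = c + ((j:ℕ) + 1 : ℕ) := by push_cast; ring
    rw [pow_succ', ← mul_assoc, opFall_mul_X, mul_assoc, ih (c+1), hc, ← mul_assoc, ← pow_succ']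

/-- `(XD − mλ)_{n,λ} X^j = X^j Σ_{k=0}^n C(n,k) (XD)_{k,λ} (j − mλ)_{n−k,λ}`. -/
theorem opFall_shift_Xpow (l : ℝ) (m n j : ℕ) :
    opFall l (Xop * Dop - ((m : ℝ) * l) • (1 : Module.End ℝ (Polynomial ℝ))) n * Xop ^ j =
      Xop ^ j * ∑ k ∈ Finset.range (n + 1),
        ((n.choose k : ℝ) * degFall l ((j : ℝ) - (m : ℝ) * l) (n - k)) •
          opFall l (Xop * Dop) k := by
  have h0 : Xop * Dop - ((m : ℝ) * l) • (1 : Module.End ℝ (Polynomial ℝ))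
      = Xop * Dop + (-((m : ℝ) * l)) • 1 := by module
  have hc : -((m : ℝ) * l) + (j : ℝ) = (j : ℝ) - (m : ℝ) * l := by ring
  rw [h0, opFall_mul_Xpow, hc, opFall_add_eq_aeval, vand_poly, map_sum]
  congr 1
  apply Finset.sum_congr rfl
  intro k _
  rw [map_mul, aeval_C, ← opFall_eq_aeval, ← Algebra.smul_def]
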